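/- arXiv:1808.08898 — 5 statements merged into one kernel-verified Lean document; each statement's English description precedes it below -/
import Mathlib

section
/- Let K ⊂ ℝ² be compact and let B ⊂ ℝ² be a bounded open set with K ⊂ B. For each n ∈ ℕ let a₁ⁿ,…,aₙⁿ ∈ K, let μⁿ = (1/n)∑_{i=1}^n δ_{aᵢⁿ}, and suppose μⁿ converges weakly-* to a probability measure μ on K which charges no points (μ({x}) = 0 for every x). Then the logarithmic potentials φⁿ(x) := ∫_K log|x−y| dμⁿ(y) = (1/n)∑_{i=1}^n log|x−aᵢⁿ| converge strongly in L¹(B) to the function φ(x) := ∫_K log|x−y| dμ(y). -/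
open MeasureTheory Filter Topology Metric Set
open scoped ENNReal

/-!
Truncate the kernel: `log ‖x - y‖ = log (max ‖x - y‖ ε) - g_ε (x, y)` where `g_ε ≥ 0` vanishes
for `‖x - y‖ ≥ ε`. The truncated kernel is continuous and bounded on `B × K`, so weak-* convergence
followed by dominated convergence gives `L¹(B)`-convergence of the truncated potentials. A
layer-cake computation gives `∫ g_ε (x, y) dx ≤ vol (ball y ε)` for every `y`, so by Tonelli the
truncation moves the potential of any measure of mass at most one by at most `vol (ball 0 ε)` in
`L¹`, uniformly in `n`; then let `ε → 0`.
-/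

noncomputable section

theorem ENNReal.tendsto_nhds_zero_of_le_add {ι : Type*} {l : Filter ι} {u : ι → ℝ≥0∞}
    {v : ℝ → ι → ℝ≥0∞} {c : ℝ → ℝ≥0∞} (hc : Tendsto c (𝓝[>] 0) (𝓝 0))
    (hv : ∀ ε > 0, Tendsto (v ε) l (𝓝 0)) (huv : ∀ ε > 0, ∀ i, u i ≤ v ε i + c ε) :
    Tendsto u l (𝓝 0) := by
  refine ENNReal.tendsto_nhds_zero.2 fun δ hδ => ?_
  have hδ2 : 0 < δ / 2 := ENNReal.half_pos hδ.ne'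
  obtain ⟨ε, hcε, hε⟩ := ((hc.eventually (gt_mem_nhds hδ2)).and self_mem_nhdsWithin).exists
  filter_upwards [ENNReal.tendsto_nhds_zero.1 (hv ε hε) _ hδ2] with i hi
  calc u i ≤ v ε i + c ε := huv ε hε i
    _ ≤ δ / 2 + δ / 2 := add_le_add hi hcε.le
    _ = δ := ENNReal.add_halves δ

theorem ENNReal.ofReal_abs_sub_le_add_add (a b c d : ℝ) :
    ENNReal.ofReal |a - d|
      ≤ ENNReal.ofReal |a - b| + ENNReal.ofReal |b - c| + ENNReal.ofReal |d - c| := by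
  have htri : |a - d| ≤ |a - b| + |b - c| + |d - c| := by
    rw [abs_sub_comm d]
    exact (abs_sub_le a c d).trans (add_le_add_left (abs_sub_le a b c) _)
  exact (ENNReal.ofReal_le_ofReal htri).trans <| ENNReal.ofReal_add_le.trans <|
    add_le_add_left ENNReal.ofReal_add_le _

section Empirical

variable {α : Type*} [MeasurableSpace α]

def empiricalMeasure (n : ℕ) (a : ℕ → α) : Measure α :=
  (n : ℝ≥0∞)⁻¹ • ∑ i ∈ Finset.range n, Measure.dirac (a i)

theorem empiricalMeasure_univ_le_one {n : ℕ} {a : ℕ → α} : empiricalMeasure n a univ ≤ 1 := by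
  simp [empiricalMeasure]

instance {n : ℕ} {a : ℕ → α} : IsFiniteMeasure (empiricalMeasure n a) :=
  ⟨empiricalMeasure_univ_le_one.trans_lt ENNReal.one_lt_top⟩

variable [MeasurableSingletonClass α]

theorem empiricalMeasure_compl_eq_zero {n : ℕ} {a : ℕ → α} {K : Set α} (ha : ∀ i < n, a i ∈ K) :
    empiricalMeasure n a Kᶜ = 0 := by
  simpa [empiricalMeasure, Measure.dirac_apply] using ha

theorem integral_empiricalMeasure (n : ℕ) (a : ℕ → α) (ψ : α → ℝ) :
    ∫ x, ψ x ∂empiricalMeasure n a = (n : ℝ)⁻¹ * ∑ i ∈ Finset.range n, ψ (a i) := by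
  rw [empiricalMeasure, integral_smul_measure, integral_finsetSum_measure]
  · simp [integral_dirac, ENNReal.toReal_inv]
  · exact fun i _ => integrable_dirac enorm_lt_top

end Empirical

section Kernel

variable {E : Type*} [SeminormedAddCommGroup E]

def truncLog (ε : ℝ) (x y : E) : ℝ := Real.log (max ‖x - y‖ ε)

theorem continuous_truncLog {ε : ℝ} (hε : 0 < ε) :
    Continuous fun p : E × E => truncLog ε p.1 p.2 :=
  ((continuous_fst.sub continuous_snd).norm.max continuous_const).log fun _ =>
    (hε.trans_le (le_max_right _ _)).ne'

theorem abs_truncLog_le {ε R : ℝ} (hε : 0 < ε) {x y : E} (h : ‖x - y‖ ≤ R) :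
    |truncLog ε x y| ≤ max |Real.log ε| |Real.log (max R ε)| :=
  abs_le_max_abs_abs (Real.log_le_log hε (le_max_right _ _))
    (Real.log_le_log (hε.trans_le (le_max_right _ _)) (max_le_max_right ε h))

theorem setOf_lt_abs_truncLog_sub_log_subset_ball {ε t : ℝ} (hε : 0 < ε) (ht : 0 ≤ t) (y : E) :
    {x | t < |truncLog ε x y - Real.log ‖x - y‖|} ⊆ ball y (ε * Real.exp (-t)) := by
  intro x hx
  rw [mem_ball, dist_eq_norm]
  rcases (norm_nonneg (x - y)).eq_or_lt with hxy | hxy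
  · rw [← hxy]; positivity
  rcases le_or_gt ε ‖x - y‖ with hle | hlt
  · simp [truncLog, max_eq_left hle] at hx
    linarith
  rw [mem_ofPred_eq, truncLog, max_eq_right hlt.le,
    abs_of_nonneg (sub_nonneg.2 (Real.log_le_log hxy hlt.le))] at hx
  rw [← Real.log_lt_log_iff hxy (by positivity), Real.log_mul hε.ne' (Real.exp_pos _).ne',
    Real.log_exp]
  linarith

end Kernel

section Potential

variable {E : Type*} [SeminormedAddCommGroup E] [MeasurableSpace E]

def logPotential (m : Measure E) (x : E) : ℝ := ∫ y, Real.log ‖x - y‖ ∂m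

def truncLogPotential (ε : ℝ) (m : Measure E) (x : E) : ℝ := ∫ y, truncLog ε x y ∂m

theorem abs_truncLogPotential_le {ε R : ℝ} (hε : 0 < ε) {m : Measure E} [IsFiniteMeasure m]
    (hm : m univ ≤ 1) {K : Set E} (hmK : ∀ᵐ y ∂m, y ∈ K) {x : E} (hR : ∀ y ∈ K, ‖x - y‖ ≤ R) :
    |truncLogPotential ε m x| ≤ max |Real.log ε| |Real.log (max R ε)| := by
  have hbound := norm_integral_le_of_norm_le_const (μ := m) (f := truncLog ε x)
    (hmK.mono fun y hy => abs_truncLog_le hε (hR y hy))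
  have hm' : m.real univ ≤ 1 := ENNReal.toReal_le_of_le_ofReal zero_le_one (by simpa using hm)
  calc |truncLogPotential ε m x| ≤ _ * m.real univ := hbound
    _ ≤ _ := mul_le_of_le_one_right (le_max_of_le_left (abs_nonneg _)) hm'

variable [OpensMeasurableSpace E]

theorem integrable_truncLog {ε R : ℝ} (hε : 0 < ε) {m : Measure E} [IsFiniteMeasure m]
    {K : Set E} (hmK : ∀ᵐ y ∂m, y ∈ K) {x : E} (hR : ∀ y ∈ K, ‖x - y‖ ≤ R) :
    Integrable (truncLog ε x) m :=
  Integrable.of_bound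
    ((continuous_truncLog hε).comp (continuous_const.prodMk continuous_id)).aestronglyMeasurable
    _ (hmK.mono fun y hy => abs_truncLog_le hε (hR y hy))

theorem ofReal_abs_logPotential_sub_truncLogPotential_le {ε : ℝ} {m : Measure E} {x : E}
    (hk : Integrable (truncLog ε x) m)
    (hg : ∫⁻ y, ENNReal.ofReal |truncLog ε x y - Real.log ‖x - y‖| ∂m ≠ ∞) :
    ENNReal.ofReal |logPotential m x - truncLogPotential ε m x|
      ≤ ∫⁻ y, ENNReal.ofReal |truncLog ε x y - Real.log ‖x - y‖| ∂m := by
  have hgap : Integrable (fun y => truncLog ε x y - Real.log ‖x - y‖) m := by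
    refine ⟨hk.aestronglyMeasurable.sub ?_, ?_⟩
    · exact (Real.measurable_log.comp
        (continuous_const.sub continuous_id).norm.measurable).aestronglyMeasurable
    · simp only [HasFiniteIntegral, Real.enorm_eq_ofReal_abs]
      exact hg.lt_top
  have hsplit : logPotential m x = truncLogPotential ε m x
      - ∫ y, (truncLog ε x y - Real.log ‖x - y‖) ∂m := by
    rw [logPotential, truncLogPotential, ← integral_sub hk hgap]
    simp
  rw [hsplit, sub_sub_cancel_left, abs_neg, ← Real.enorm_eq_ofReal_abs]
  simpa only [Real.enorm_eq_ofReal_abs] using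
    enorm_integral_le_lintegral_enorm (μ := m) fun y => truncLog ε x y - Real.log ‖x - y‖

variable [SecondCountableTopology E]

theorem measurable_abs_truncLog_sub_log {ε : ℝ} (hε : 0 < ε) :
    Measurable fun p : E × E => |truncLog ε p.1 p.2 - Real.log ‖p.1 - p.2‖| :=
  ((continuous_truncLog hε).measurable.sub
    (Real.measurable_log.comp (continuous_fst.sub continuous_snd).norm.measurable)).abs

theorem tendsto_lintegral_truncLogPotential_sub {ε R : ℝ} (hε : 0 < ε) {ν : Measure E}
    {B K : Set E} (hBm : MeasurableSet B) (hB : ν B ≠ ∞) (hR : ∀ x ∈ B, ∀ y ∈ K, ‖x - y‖ ≤ R)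
    {m : ℕ → Measure E} [∀ n, IsFiniteMeasure (m n)] (hm : ∀ n, m n univ ≤ 1)
    (hmK : ∀ n, ∀ᵐ y ∂m n, y ∈ K) {μ : Measure E} [IsFiniteMeasure μ] (hμ : μ univ ≤ 1)
    (hμK : ∀ᵐ y ∂μ, y ∈ K)
    (hconv : ∀ x, Tendsto (fun n => truncLogPotential ε (m n) x) atTop
      (𝓝 (truncLogPotential ε μ x))) :
    Tendsto (fun n => ∫⁻ x in B,
      ENNReal.ofReal |truncLogPotential ε (m n) x - truncLogPotential ε μ x| ∂ν) atTop (𝓝 0) := by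
  set M := max |Real.log ε| |Real.log (max R ε)|
  have hmeas : ∀ (m : Measure E) [IsFiniteMeasure m], Measurable (truncLogPotential ε m) :=
    fun m _ => (continuous_truncLog hε).stronglyMeasurable.integral_prod_right'.measurable
  have hdom : ∀ n, ∀ x ∈ B,
      ENNReal.ofReal |truncLogPotential ε (m n) x - truncLogPotential ε μ x|
        ≤ ENNReal.ofReal (M + M) := fun n x hx =>
    ENNReal.ofReal_le_ofReal ((abs_sub _ _).trans (add_le_add
      (abs_truncLogPotential_le hε (hm n) (hmK n) (hR x hx))
      (abs_truncLogPotential_le hε hμ hμK (hR x hx))))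
  have hlim : ∀ x, Tendsto (fun n =>
      ENNReal.ofReal |truncLogPotential ε (m n) x - truncLogPotential ε μ x|) atTop (𝓝 0) := by
    intro x
    simpa using ENNReal.tendsto_ofReal ((hconv x).sub_const (truncLogPotential ε μ x)).abs
  simpa using tendsto_lintegral_of_dominated_convergence' (μ := ν.restrict B) _
    (fun n => ((hmeas (m n)).sub (hmeas μ)).abs.ennreal_ofReal.aemeasurable)
    (fun n => ae_restrict_of_forall_mem hBm (hdom n))
    (by simpa using ENNReal.mul_ne_top ENNReal.ofReal_ne_top hB) (ae_of_all _ hlim)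

end Potential

section Haar

variable {E : Type*} [NormedAddCommGroup E] [NormedSpace ℝ E] [FiniteDimensional ℝ E]
  [MeasurableSpace E] [BorelSpace E] [Nontrivial E] (ν : Measure E) [ν.IsAddHaarMeasure]

theorem tendsto_addHaar_ball_zero (x : E) :
    Tendsto (fun r => ν (ball x r)) (𝓝[>] 0) (𝓝 0) := by
  have hd : Module.finrank ℝ E ≠ 0 := Module.finrank_pos.ne'
  have hlim : Tendsto (fun r : ℝ => ENNReal.ofReal (r ^ Module.finrank ℝ E) * ν (ball 0 1))
      (𝓝 0) (𝓝 (ENNReal.ofReal (0 ^ Module.finrank ℝ E) * ν (ball 0 1))) :=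
    ENNReal.Tendsto.mul_const ((ENNReal.continuous_ofReal.comp (continuous_pow _)).tendsto 0)
      (Or.inr measure_ball_lt_top.ne)
  rw [zero_pow hd, ENNReal.ofReal_zero, zero_mul] at hlim
  refine (hlim.mono_left nhdsWithin_le_nhds).congr' ?_
  filter_upwards [self_mem_nhdsWithin] with r hr
  exact (Measure.addHaar_ball ν x (le_of_lt hr)).symm

theorem lintegral_abs_truncLog_sub_log_le {ε : ℝ} (hε : 0 < ε) (y : E) :
    ∫⁻ x, ENNReal.ofReal |truncLog ε x y - Real.log ‖x - y‖| ∂ν ≤ ν (ball y ε) := by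
  set d := Module.finrank ℝ E
  have hd : d ≠ 0 := Module.finrank_pos.ne'
  calc ∫⁻ x, ENNReal.ofReal |truncLog ε x y - Real.log ‖x - y‖| ∂ν
      = ∫⁻ t in Ioi 0, ν {x | t < |truncLog ε x y - Real.log ‖x - y‖|} :=
        lintegral_eq_lintegral_meas_lt ν (ae_of_all _ fun _ => abs_nonneg _)
          ((measurable_abs_truncLog_sub_log hε).comp
            (measurable_id.prodMk measurable_const)).aemeasurable
    _ ≤ ∫⁻ t in Ioi 0, ENNReal.ofReal (Real.exp (-t)) * ν (ball y ε) := by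
        refine setLIntegral_mono' measurableSet_Ioi fun t ht => ?_
        have hexp : Real.exp (-t) ^ d ≤ Real.exp (-t) :=
          pow_le_of_le_one (Real.exp_nonneg _) (Real.exp_le_one_iff.2 (by simpa using ht.le)) hd
        calc ν {x | t < |truncLog ε x y - Real.log ‖x - y‖|}
            ≤ ν (ball y (ε * Real.exp (-t))) :=
              measure_mono (setOf_lt_abs_truncLog_sub_log_subset_ball hε (le_of_lt ht) y)
          _ = ENNReal.ofReal (Real.exp (-t) ^ d) * (ENNReal.ofReal (ε ^ d) * ν (ball 0 1)) := by
              rw [Measure.addHaar_ball ν y (by positivity), mul_pow, mul_comm (ε ^ d),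
                ENNReal.ofReal_mul (by positivity), mul_assoc]
          _ ≤ ENNReal.ofReal (Real.exp (-t)) * ν (ball y ε) := by
              rw [Measure.addHaar_ball ν y hε.le]
              gcongr
    _ = ν (ball y ε) := by
        rw [lintegral_mul_const' _ _ measure_ball_lt_top.ne,
          ← ofReal_integral_eq_lintegral_ofReal (integrableOn_exp_neg_Ioi 0)
            (ae_of_all _ fun _ => Real.exp_nonneg _), integral_exp_neg_Ioi_zero,
          ENNReal.ofReal_one, one_mul]

theorem lintegral_lintegral_abs_truncLog_sub_log_le {ε : ℝ} (hε : 0 < ε) (m : Measure E)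
    [SFinite m] :
    ∫⁻ x, ∫⁻ y, ENNReal.ofReal |truncLog ε x y - Real.log ‖x - y‖| ∂m ∂ν
      ≤ m univ * ν (ball 0 ε) := by
  rw [lintegral_lintegral_swap (measurable_abs_truncLog_sub_log hε).ennreal_ofReal.aemeasurable]
  calc ∫⁻ y, ∫⁻ x, ENNReal.ofReal |truncLog ε x y - Real.log ‖x - y‖| ∂ν ∂m
      ≤ ∫⁻ _, ν (ball 0 ε) ∂m := lintegral_mono fun y =>
        (lintegral_abs_truncLog_sub_log_le ν hε y).trans_eq (Measure.addHaar_ball_center ν y ε)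
    _ = m univ * ν (ball 0 ε) := by rw [lintegral_const, mul_comm]

theorem ae_ofReal_abs_logPotential_sub_truncLogPotential_le {ε R : ℝ} (hε : 0 < ε)
    {m : Measure E} [IsFiniteMeasure m] {B K : Set E} (hBm : MeasurableSet B)
    (hmK : ∀ᵐ y ∂m, y ∈ K) (hR : ∀ x ∈ B, ∀ y ∈ K, ‖x - y‖ ≤ R) :
    ∀ᵐ x ∂ν.restrict B, ENNReal.ofReal |logPotential m x - truncLogPotential ε m x|
      ≤ ∫⁻ y, ENNReal.ofReal |truncLog ε x y - Real.log ‖x - y‖| ∂m := by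
  have hfin : ∀ᵐ x ∂ν, ∫⁻ y, ENNReal.ofReal |truncLog ε x y - Real.log ‖x - y‖| ∂m < ∞ :=
    ae_lt_top (measurable_abs_truncLog_sub_log hε).ennreal_ofReal.lintegral_prod_right'
      (ne_top_of_le_ne_top (ENNReal.mul_ne_top (measure_ne_top m univ) measure_ball_lt_top.ne)
        (lintegral_lintegral_abs_truncLog_sub_log_le ν hε m))
  filter_upwards [ae_restrict_of_ae hfin, ae_restrict_mem hBm] with x hx hxB
  exact ofReal_abs_logPotential_sub_truncLogPotential_le
    (integrable_truncLog hε hmK (hR x hxB)) hx.ne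

theorem lintegral_abs_logPotential_sub_le {ε R : ℝ} (hε : 0 < ε) {B K : Set E}
    (hBm : MeasurableSet B) (hR : ∀ x ∈ B, ∀ y ∈ K, ‖x - y‖ ≤ R) {m m' : Measure E}
    [IsFiniteMeasure m] [IsFiniteMeasure m'] (hm : m univ ≤ 1) (hm' : m' univ ≤ 1)
    (hmK : ∀ᵐ y ∂m, y ∈ K) (hm'K : ∀ᵐ y ∂m', y ∈ K) :
    ∫⁻ x in B, ENNReal.ofReal |logPotential m x - logPotential m' x| ∂ν
      ≤ ∫⁻ x in B, ENNReal.ofReal |truncLogPotential ε m x - truncLogPotential ε m' x| ∂ν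
        + 2 * ν (ball 0 ε) := by
  set G : Measure E → E → ℝ≥0∞ := fun m x =>
    ∫⁻ y, ENNReal.ofReal |truncLog ε x y - Real.log ‖x - y‖| ∂m
  have hGm : ∀ (m : Measure E) [SFinite m], Measurable (G m) := fun m _ =>
    (measurable_abs_truncLog_sub_log hε).ennreal_ofReal.lintegral_prod_right'
  have hGB : ∀ (m : Measure E) [SFinite m], m univ ≤ 1 → ∫⁻ x in B, G m x ∂ν ≤ ν (ball 0 ε) :=
    fun m _ hm => (setLIntegral_le_lintegral _ _).trans
      ((lintegral_lintegral_abs_truncLog_sub_log_le ν hε m).trans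
        (mul_le_of_le_one_left zero_le hm))
  calc ∫⁻ x in B, ENNReal.ofReal |logPotential m x - logPotential m' x| ∂ν
      ≤ ∫⁻ x in B, G m x
          + ENNReal.ofReal |truncLogPotential ε m x - truncLogPotential ε m' x| + G m' x ∂ν := by
        refine lintegral_mono_ae ?_
        filter_upwards [ae_ofReal_abs_logPotential_sub_truncLogPotential_le ν hε hBm hmK hR,
          ae_ofReal_abs_logPotential_sub_truncLogPotential_le ν hε hBm hm'K hR] with x hx hx'
        exact (ENNReal.ofReal_abs_sub_le_add_add _ _ _ _).trans (by gcongr)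
    _ = ∫⁻ x in B, G m x ∂ν
          + ∫⁻ x in B, ENNReal.ofReal |truncLogPotential ε m x - truncLogPotential ε m' x| ∂ν
          + ∫⁻ x in B, G m' x ∂ν := by
        rw [lintegral_add_right' _ (hGm m').aemeasurable, lintegral_add_left (hGm m)]
    _ ≤ ν (ball 0 ε)
          + ∫⁻ x in B, ENNReal.ofReal |truncLogPotential ε m x - truncLogPotential ε m' x| ∂ν
          + ν (ball 0 ε) := by gcongr; exacts [hGB m hm, hGB m' hm']
    _ = _ := by ring

end Haar

end

theorem stmt1_general
    (K B : Set (EuclideanSpace ℝ (Fin 2))) (hK : IsCompact K)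
    (hBopen : IsOpen B) (hBbd : Bornology.IsBounded B)
    (a : ℕ → ℕ → EuclideanSpace ℝ (Fin 2))
    (ha : ∀ n, ∀ i < n, a n i ∈ K)
    (μ : Measure (EuclideanSpace ℝ (Fin 2))) [IsProbabilityMeasure μ]
    (hμK : μ Kᶜ = 0)
    (hconv : ∀ ψ : EuclideanSpace ℝ (Fin 2) → ℝ, Continuous ψ →
      Tendsto (fun n : ℕ =>
          ∫ x, ψ x ∂(((n : ℝ≥0∞))⁻¹ • ∑ i ∈ Finset.range n, Measure.dirac (a n i)))
        atTop (𝓝 (∫ x, ψ x ∂μ))) :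
    Tendsto (fun n : ℕ =>
        ∫ x in B, |(n : ℝ)⁻¹ * ∑ i ∈ Finset.range n, Real.log ‖x - a n i‖
          - ∫ y, Real.log ‖x - y‖ ∂μ|) atTop (𝓝 0) := by
  set m := fun n => empiricalMeasure n (a n)
  have hmK : ∀ n, ∀ᵐ y ∂m n, y ∈ K := fun n =>
    mem_ae_iff.2 (empiricalMeasure_compl_eq_zero (ha n))
  obtain ⟨R, hR⟩ : ∃ R, ∀ x ∈ B, ∀ y ∈ K, ‖x - y‖ ≤ R := by
    obtain ⟨R, hR⟩ := Metric.isBounded_iff.1 (hBbd.union hK.isBounded)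
    exact ⟨R, fun x hx y hy => dist_eq_norm x y ▸ hR (Or.inl hx) (Or.inr hy)⟩
  have hc : Tendsto (fun ε => 2 * volume (ball (0 : EuclideanSpace ℝ (Fin 2)) ε))
      (𝓝[>] 0) (𝓝 0) := by
    simpa only [mul_zero] using
      ENNReal.Tendsto.const_mul (tendsto_addHaar_ball_zero volume 0) (Or.inr ENNReal.ofNat_ne_top)
  have hL : Tendsto (fun n => ∫⁻ x in B,
      ENNReal.ofReal |logPotential (m n) x - logPotential μ x|) atTop (𝓝 0) := by
    refine ENNReal.tendsto_nhds_zero_of_le_add hc (fun ε hε => ?_) fun ε hε n =>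
      lintegral_abs_logPotential_sub_le volume hε hBopen.measurableSet hR
        empiricalMeasure_univ_le_one prob_le_one (hmK n) (mem_ae_iff.2 hμK)
    exact tendsto_lintegral_truncLogPotential_sub hε hBopen.measurableSet hBbd.measure_lt_top.ne hR
      (fun n => empiricalMeasure_univ_le_one) hmK prob_le_one (mem_ae_iff.2 hμK)
      fun x => hconv _ ((continuous_truncLog hε).comp (continuous_const.prodMk continuous_id))
  refine squeeze_zero (fun n => integral_nonneg fun x => abs_nonneg _) (fun n => ?_)
    ((ENNReal.tendsto_toReal ENNReal.zero_ne_top).comp hL)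
  refine (le_abs_self _).trans ?_
  simpa [logPotential, m, integral_empiricalMeasure] using
    norm_integral_le_lintegral_norm (μ := volume.restrict B) fun x =>
      |logPotential (m n) x - logPotential μ x|

/-- If empirical measures of points in a compact `K ⊆ B ⊆ ℝ²` converge weakly-*
to a probability measure `μ` on `K` charging no points, then the logarithmic potentials
`φⁿ(x) = (1/n)∑ log|x - aᵢⁿ|` converge strongly in `L¹(B)` to `φ(x) = ∫ log|x-y| dμ(y)`. -/
theorem stmt1
    (K B : Set (EuclideanSpace ℝ (Fin 2))) (hK : IsCompact K)
    (hBopen : IsOpen B) (hBbd : Bornology.IsBounded B) (hKB : K ⊆ B)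
    (a : ℕ → ℕ → EuclideanSpace ℝ (Fin 2))
    (ha : ∀ n, ∀ i < n, a n i ∈ K)
    (μ : Measure (EuclideanSpace ℝ (Fin 2))) [IsProbabilityMeasure μ]
    (hμK : μ Kᶜ = 0)
    (hatom : ∀ x, μ {x} = 0)
    (hconv : ∀ ψ : EuclideanSpace ℝ (Fin 2) → ℝ, Continuous ψ →
      Tendsto (fun n : ℕ =>
          ∫ x, ψ x ∂(((n : ℝ≥0∞))⁻¹ • ∑ i ∈ Finset.range n, Measure.dirac (a n i)))
        atTop (𝓝 (∫ x, ψ x ∂μ))) :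
    Tendsto (fun n : ℕ =>
        ∫ x in B, |(n : ℝ)⁻¹ * ∑ i ∈ Finset.range n, Real.log ‖x - a n i‖
          - ∫ y, Real.log ‖x - y‖ ∂μ|) atTop (𝓝 0) :=
  stmt1_general K B hK hBopen hBbd a ha μ hμK hconv
end

section
/- Let K ⊂ ℝ² be compact and let B ⊂ ℝ² be a bounded open set with K ⊂ B. Let μ be a probability measure on ℝ² with support contained in K and assume the logarithmic energy is finite: −∫∫ log|y−z| d(μ⊗μ)(y,z) < +∞. Then the function γ(y,z) := ∫_B 1/(|x−y| |x−z|) dx belongs to L¹(B×B, μ⊗μ), i.e. ∫∫ γ(y,z) d(μ⊗μ)(y,z) < +∞. -/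
/-!
For `y ≠ z` put `d = ‖y - z‖`. Of the two distances `‖x - y‖`, `‖x - z‖`, the larger one is at least
`d / 2` and at least the smaller one, so the integrand is bounded by `k ‖x - y‖ + k ‖x - z‖` with
`k s = (s * max (d / 2) s)⁻¹`. In polar coordinates around a point, the radial weight `r` turns
`k r` into `(max (d / 2) r)⁻¹`, whose integral over `(0, ρ)` is `1 + log (2ρ / d)`. Hence
`γ (y, z) ≤ C₁ + C₂ |log ‖y - z‖|` on `B × B`, which is `μ ⊗ μ`-integrable by the finite energy.
-/

open MeasureTheory Set Metric Topology
open scoped ENNReal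

theorem integral_inv_max {a ρ : ℝ} (ha : 0 < a) (haρ : a ≤ ρ) :
    ∫ r in (0 : ℝ)..ρ, (max a r)⁻¹ = 1 + Real.log (ρ / a) := by
  have hint : ∀ u v : ℝ, IntervalIntegrable (fun r => (max a r)⁻¹) volume u v := fun u v =>
    (continuous_const.max continuous_id).inv₀
      (fun r => (ha.trans_le (le_max_left a r)).ne') |>.intervalIntegrable u v
  rw [← intervalIntegral.integral_add_adjacent_intervals (hint 0 a) (hint a ρ)]
  congr 1
  · rw [intervalIntegral.integral_congr (g := fun _ => a⁻¹) fun r hr => by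
      rw [uIcc_of_le ha.le] at hr
      simp [max_eq_left hr.2]]
    simp [ha.ne']
  · rw [intervalIntegral.integral_congr (g := fun r => r⁻¹) fun r hr => by
      rw [uIcc_of_le haρ] at hr
      simp [max_eq_right hr.1]]
    exact integral_inv_of_pos ha (ha.trans_le haρ)

theorem setLIntegral_Ioo_inv_max {a ρ : ℝ} (ha : 0 < a) (haρ : a ≤ ρ) :
    ∫⁻ r in Ioo 0 ρ, ENNReal.ofReal (max a r)⁻¹ = ENNReal.ofReal (1 + Real.log (ρ / a)) := by
  have hcont : Continuous fun r : ℝ => (max a r)⁻¹ :=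
    (continuous_const.max continuous_id).inv₀ fun r => (ha.trans_le (le_max_left a r)).ne'
  rw [Measure.restrict_congr_set Ioo_ae_eq_Ioc, ← integral_inv_max ha haρ,
    intervalIntegral.integral_of_le (ha.le.trans haρ),
    ofReal_integral_eq_lintegral_ofReal hcont.integrableOn_Ioc
      (ae_of_all _ fun r => inv_nonneg.2 (ha.le.trans (le_max_left a r)))]

theorem setLIntegral_Ioo_inv_eq_top {ρ : ℝ} (hρ : 0 < ρ) :
    ∫⁻ r in Ioo 0 ρ, ENNReal.ofReal r⁻¹ = ∞ := by
  by_contra h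
  have hint : IntegrableOn (fun r : ℝ => r⁻¹) (Ioo 0 ρ) :=
    (lintegral_ofReal_ne_top_iff_integrable (by fun_prop)
      ((ae_restrict_iff' measurableSet_Ioo).2 (ae_of_all _ fun r hr => inv_nonneg.2 hr.1.le))).1 h
  rw [← intervalIntegrable_iff_integrableOn_Ioo_of_le hρ.le, intervalIntegrable_inv_iff] at hint
  simp [hρ.ne, hρ.le] at hint

theorem inv_mul_le_inv_mul_max_add {s t d : ℝ} (hs : 0 ≤ s) (ht : 0 ≤ t) (hd : d ≤ s + t) :
    (s * t)⁻¹ ≤ (s * max (d / 2) s)⁻¹ + (t * max (d / 2) t)⁻¹ := by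
  wlog hst : s ≤ t generalizing s t
  · rw [mul_comm, add_comm]
    exact this ht hs (by linarith) (le_of_not_ge hst)
  have hmax : max (d / 2) s ≤ t := max_le (by linarith) hst
  have hrest : 0 ≤ (t * max (d / 2) t)⁻¹ := by positivity
  rcases hs.eq_or_lt with rfl | hs
  · simpa using hrest
  · have : (s * t)⁻¹ ≤ (s * max (d / 2) s)⁻¹ :=
      inv_anti₀ (mul_pos hs (hs.trans_le (le_max_right _ _))) (by gcongr)
    linarith

section

variable {E : Type*} [NormedAddCommGroup E] [NormedSpace ℝ E] [FiniteDimensional ℝ E]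
  [MeasurableSpace E] [BorelSpace E] (μ : Measure E) [μ.IsAddHaarMeasure]

theorem lintegral_fun_norm_addHaar [Nontrivial E] {f : ℝ → ℝ≥0∞} (hf : Measurable f) :
    ∫⁻ x, f ‖x‖ ∂μ = Module.finrank ℝ E * μ (ball 0 1) *
      ∫⁻ r in Ioi (0 : ℝ), ENNReal.ofReal (r ^ (Module.finrank ℝ E - 1)) * f r := by
  calc ∫⁻ x, f ‖x‖ ∂μ = ∫⁻ x : ({(0 : E)}ᶜ : Set E), f ‖x.1‖ ∂(μ.comap (↑)) := by
        rw [lintegral_subtype_comap (measurableSet_singleton _).compl (fun x => f ‖x‖),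
          restrict_compl_singleton]
    _ = ∫⁻ x, f x.2 ∂(μ.toSphere.prod (Measure.volumeIoiPow (Module.finrank ℝ E - 1))) := by
        simpa using ((μ.measurePreserving_homeomorphUnitSphereProd).lintegral_comp_emb
          (Homeomorph.measurableEmbedding _) (f ∘ Subtype.val ∘ Prod.snd))
    _ = μ.toSphere univ * ∫⁻ r, f r ∂(Measure.volumeIoiPow (Module.finrank ℝ E - 1)) := by
        rw [lintegral_prod _ (by fun_prop)]
        simp only [MeasureTheory.lintegral_const, mul_comm]
    _ = _ := by
        rw [Measure.toSphere_apply_univ, Measure.volumeIoiPow,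
          lintegral_withDensity_eq_lintegral_mul _ (by fun_prop) (by fun_prop)]
        exact congrArg _ (lintegral_subtype_comap measurableSet_Ioi
          (fun r => ENNReal.ofReal (r ^ (Module.finrank ℝ E - 1)) * f r))

theorem setLIntegral_ball_fun_norm_sub [Nontrivial E] {f : ℝ → ℝ≥0∞} (hf : Measurable f)
    (c : E) (ρ : ℝ) :
    ∫⁻ x in ball c ρ, f ‖x - c‖ ∂μ = Module.finrank ℝ E * μ (ball 0 1) *
      ∫⁻ r in Ioo 0 ρ, ENNReal.ofReal (r ^ (Module.finrank ℝ E - 1)) * f r := by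
  have hball :
      (ball c ρ).indicator (fun x => f ‖x - c‖) = fun x => (Iio ρ).indicator f ‖x - c‖ := by
    ext x
    simp [indicator, dist_eq_norm]
  rw [← lintegral_indicator measurableSet_ball, hball,
    lintegral_sub_right_eq_self (fun x => (Iio ρ).indicator f ‖x‖),
    lintegral_fun_norm_addHaar μ (hf.indicator measurableSet_Iio), ← Ioi_inter_Iio, inter_comm,
    ← Measure.restrict_restrict measurableSet_Iio, ← lintegral_indicator measurableSet_Iio]
  congr 2
  ext r
  by_cases hr : r < ρ <;> simp [indicator, hr]

theorem setLIntegral_ball_fun_norm_sub_of_finrank_eq_two (hE : Module.finrank ℝ E = 2)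
    {f : ℝ → ℝ≥0∞} (hf : Measurable f) (c : E) (ρ : ℝ) :
    ∫⁻ x in ball c ρ, f ‖x - c‖ ∂μ =
      2 * μ (ball 0 1) * ∫⁻ r in Ioo 0 ρ, ENNReal.ofReal r * f r := by
  have : Nontrivial E := Module.nontrivial_of_finrank_pos (R := ℝ) (by omega)
  simp [setLIntegral_ball_fun_norm_sub μ hf, hE]

theorem setLIntegral_ball_inv_norm_sub_mul_max (hE : Module.finrank ℝ E = 2) {a ρ : ℝ}
    (ha : 0 < a) (haρ : a ≤ ρ) (c : E) :
    ∫⁻ x in ball c ρ, ENNReal.ofReal ((‖x - c‖ * max a ‖x - c‖)⁻¹) ∂μ =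
      2 * μ (ball 0 1) * ENNReal.ofReal (1 + Real.log (ρ / a)) := by
  rw [setLIntegral_ball_fun_norm_sub_of_finrank_eq_two μ hE
      (f := fun r => ENNReal.ofReal ((r * max a r)⁻¹)) (by fun_prop),
    ← setLIntegral_Ioo_inv_max ha haρ]
  congr 1
  refine setLIntegral_congr_fun measurableSet_Ioo fun r hr => ?_
  rw [← ENNReal.ofReal_mul hr.1.le, mul_inv, ← mul_assoc, mul_inv_cancel₀ hr.1.ne', one_mul]

theorem setLIntegral_ball_inv_norm_sub_sq (hE : Module.finrank ℝ E = 2) {ρ : ℝ} (hρ : 0 < ρ)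
    (c : E) : ∫⁻ x in ball c ρ, ENNReal.ofReal ((‖x - c‖ * ‖x - c‖)⁻¹) ∂μ = ∞ := by
  rw [setLIntegral_ball_fun_norm_sub_of_finrank_eq_two μ hE
      (f := fun r => ENNReal.ofReal ((r * r)⁻¹)) (by fun_prop),
    setLIntegral_congr_fun measurableSet_Ioo (g := fun r => ENNReal.ofReal r⁻¹) fun r hr => by
      rw [← ENNReal.ofReal_mul hr.1.le, mul_inv, ← mul_assoc, mul_inv_cancel₀ hr.1.ne', one_mul],
    setLIntegral_Ioo_inv_eq_top hρ]
  exact ENNReal.mul_top (by simp [(measure_ball_pos μ (0 : E) one_pos).ne'])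

theorem not_integrableOn_inv_norm_sub_sq (hE : Module.finrank ℝ E = 2) {s : Set E} {c : E}
    (hs : s ∈ 𝓝 c) : ¬ IntegrableOn (fun x => (‖x - c‖ * ‖x - c‖)⁻¹) s μ := by
  intro hint
  obtain ⟨ρ, hρ, hball⟩ := Metric.mem_nhds_iff.1 hs
  have := (hint.mono_set hball).hasFiniteIntegral
  rw [hasFiniteIntegral_iff_ofReal (ae_of_all _ fun x => by positivity),
    setLIntegral_ball_inv_norm_sub_sq μ hE hρ] at this
  exact lt_irrefl _ this

theorem setLIntegral_inv_norm_sub_mul_norm_sub_le (hE : Module.finrank ℝ E = 2) {s : Set E}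
    {y z : E} {ρ : ℝ} (hy : s ⊆ ball y ρ) (hz : s ⊆ ball z ρ) (hyz : y ≠ z)
    (hρ : ‖y - z‖ ≤ 2 * ρ) :
    ∫⁻ x in s, ENNReal.ofReal ((‖x - y‖ * ‖x - z‖)⁻¹) ∂μ ≤
      4 * μ (ball 0 1) * ENNReal.ofReal (1 + Real.log (2 * ρ / ‖y - z‖)) := by
  set d := ‖y - z‖
  have hd : 0 < d / 2 := by have := norm_pos_iff.2 (sub_ne_zero.2 hyz); positivity
  have hdρ : d / 2 ≤ ρ := by linarith
  have hpt : ∀ x, ENNReal.ofReal ((‖x - y‖ * ‖x - z‖)⁻¹) ≤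
      ENNReal.ofReal ((‖x - y‖ * max (d / 2) ‖x - y‖)⁻¹) +
        ENNReal.ofReal ((‖x - z‖ * max (d / 2) ‖x - z‖)⁻¹) := fun x => by
    rw [← ENNReal.ofReal_add (by positivity) (by positivity)]
    refine ENNReal.ofReal_le_ofReal (inv_mul_le_inv_mul_max_add (norm_nonneg _) (norm_nonneg _) ?_)
    simpa [norm_sub_rev y x] using norm_sub_le_norm_sub_add_norm_sub y x z
  have hlog : ρ / (d / 2) = 2 * ρ / d := by field_simp
  calc ∫⁻ x in s, ENNReal.ofReal ((‖x - y‖ * ‖x - z‖)⁻¹) ∂μ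
      ≤ ∫⁻ x in s, ENNReal.ofReal ((‖x - y‖ * max (d / 2) ‖x - y‖)⁻¹) ∂μ +
          ∫⁻ x in s, ENNReal.ofReal ((‖x - z‖ * max (d / 2) ‖x - z‖)⁻¹) ∂μ := by
        rw [← lintegral_add_left (by fun_prop)]
        exact lintegral_mono hpt
    _ ≤ ∫⁻ x in ball y ρ, ENNReal.ofReal ((‖x - y‖ * max (d / 2) ‖x - y‖)⁻¹) ∂μ +
          ∫⁻ x in ball z ρ, ENNReal.ofReal ((‖x - z‖ * max (d / 2) ‖x - z‖)⁻¹) ∂μ :=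
        add_le_add (lintegral_mono_set hy) (lintegral_mono_set hz)
    _ = 4 * μ (ball 0 1) * ENNReal.ofReal (1 + Real.log (2 * ρ / d)) := by
        rw [setLIntegral_ball_inv_norm_sub_mul_max μ hE hd hdρ,
          setLIntegral_ball_inv_norm_sub_mul_max μ hE hd hdρ, hlog]
        ring

theorem setIntegral_inv_norm_sub_mul_norm_sub_le (hE : Module.finrank ℝ E = 2) {s : Set E}
    {y z : E} {ρ : ℝ} (hy : s ⊆ ball y ρ) (hz : s ⊆ ball z ρ) (hyz : y ≠ z)
    (hρ : ‖y - z‖ ≤ 2 * ρ) :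
    ∫ x in s, (‖x - y‖ * ‖x - z‖)⁻¹ ∂μ ≤
      4 * μ.real (ball 0 1) * (1 + Real.log (2 * ρ / ‖y - z‖)) := by
  have hd : 0 < ‖y - z‖ := norm_pos_iff.2 (sub_ne_zero.2 hyz)
  have hlog : 0 ≤ Real.log (2 * ρ / ‖y - z‖) := Real.log_nonneg ((one_le_div hd).2 hρ)
  rw [integral_eq_lintegral_of_nonneg_ae (ae_of_all _ fun x => by positivity) (by fun_prop)]
  refine ENNReal.toReal_le_of_le_ofReal (by positivity) ?_
  refine (setLIntegral_inv_norm_sub_mul_norm_sub_le μ hE hy hz hyz hρ).trans_eq ?_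
  rw [ENNReal.ofReal_mul (by positivity), ENNReal.ofReal_mul (by positivity),
    ENNReal.ofReal_ofNat, Measure.real, ENNReal.ofReal_toReal measure_ball_lt_top.ne]

theorem setIntegral_inv_norm_sub_mul_norm_sub_le_abs_log (hE : Module.finrank ℝ E = 2)
    {s : Set E} (hs : IsOpen s) {R : ℝ} (hR : 1 ≤ R) (hsR : s ⊆ ball 0 R) {y z : E}
    (hy : y ∈ s) (hz : z ∈ s) :
    ∫ x in s, (‖x - y‖ * ‖x - z‖)⁻¹ ∂μ ≤
      4 * μ.real (ball 0 1) * (1 + Real.log (4 * R)) +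
        4 * μ.real (ball 0 1) * |Real.log ‖y - z‖| := by
  have hV : 0 ≤ μ.real (ball 0 1) := measureReal_nonneg
  have hlogR : 0 ≤ Real.log (4 * R) := Real.log_nonneg (by linarith)
  rcases eq_or_ne y z with rfl | hyz
  -- the integrand is not integrable, so the integral takes the junk value 0
  · rw [integral_undef (not_integrableOn_inv_norm_sub_sq μ hE (hs.mem_nhds hy))]
    positivity
  have hsub : ∀ w ∈ s, s ⊆ ball w (2 * R) := fun w hw => hsR.trans <| ball_subset_ball' <| by
    rw [dist_comm, dist_zero_right]
    linarith [mem_ball_zero_iff.1 (hsR hw)]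
  have hyz_le : ‖y - z‖ ≤ 2 * (2 * R) := by
    linarith [norm_sub_le y z, mem_ball_zero_iff.1 (hsR hy), mem_ball_zero_iff.1 (hsR hz)]
  have hd : 0 < ‖y - z‖ := norm_pos_iff.2 (sub_ne_zero.2 hyz)
  calc ∫ x in s, (‖x - y‖ * ‖x - z‖)⁻¹ ∂μ
      ≤ 4 * μ.real (ball 0 1) * (1 + Real.log (2 * (2 * R) / ‖y - z‖)) :=
        setIntegral_inv_norm_sub_mul_norm_sub_le μ hE (hsub y hy) (hsub z hz) hyz hyz_le
    _ ≤ _ := by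
        rw [show 2 * (2 * R) = 4 * R by ring, Real.log_div (by positivity) hd.ne']
        nlinarith [mul_le_mul_of_nonneg_left (neg_le_abs (Real.log ‖y - z‖)) hV]

end

theorem stmt3_general
    (K B : Set (EuclideanSpace ℝ (Fin 2)))
    (hBopen : IsOpen B) (hBbd : Bornology.IsBounded B) (hKB : K ⊆ B)
    (μ : Measure (EuclideanSpace ℝ (Fin 2))) [IsProbabilityMeasure μ]
    (hμK : μ Kᶜ = 0)
    (henergy : Integrable
      (fun p : EuclideanSpace ℝ (Fin 2) × EuclideanSpace ℝ (Fin 2) =>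
        Real.log ‖p.1 - p.2‖) (μ.prod μ)) :
    Integrable
      (fun p : EuclideanSpace ℝ (Fin 2) × EuclideanSpace ℝ (Fin 2) =>
        ∫ x in B, (‖x - p.1‖ * ‖x - p.2‖)⁻¹) (μ.prod μ) := by
  obtain ⟨R, hR, hBR⟩ := hBbd.subset_ball_lt 1 0
  set V := volume.real (ball (0 : EuclideanSpace ℝ (Fin 2)) 1)
  have hsupp : ∀ᵐ p ∂μ.prod μ, p.1 ∈ K ∧ p.2 ∈ K :=
    (Measure.quasiMeasurePreserving_fst.ae (mem_ae_iff.2 hμK)).and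
      (Measure.quasiMeasurePreserving_snd.ae (mem_ae_iff.2 hμK))
  have hmeas : Measurable fun q : (EuclideanSpace ℝ (Fin 2) × EuclideanSpace ℝ (Fin 2)) ×
      EuclideanSpace ℝ (Fin 2) => (‖q.2 - q.1.1‖ * ‖q.2 - q.1.2‖)⁻¹ := by
    fun_prop
  refine ((integrable_const (4 * V * (1 + Real.log (4 * R)))).add
    (henergy.abs.const_mul (4 * V))).mono'
    (hmeas.stronglyMeasurable.integral_prod_right' (ν := volume.restrict B)).aestronglyMeasurable ?_
  filter_upwards [hsupp] with ⟨y, z⟩ ⟨hy, hz⟩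
  rw [Real.norm_of_nonneg (setIntegral_nonneg_of_ae (ae_of_all _ fun x => by positivity))]
  exact setIntegral_inv_norm_sub_mul_norm_sub_le_abs_log volume finrank_euclideanSpace_fin
    hBopen hR.le hBR (hKB hy) (hKB hz)

/-- If `μ` is a probability measure supported in a compact `K ⊆ B ⊆ ℝ²`
(`B` bounded open) with finite logarithmic energy, then
`γ(y,z) = ∫_B 1/(|x-y||x-z|) dx` belongs to `L¹(B×B, μ⊗μ)`. -/
theorem stmt3
    (K B : Set (EuclideanSpace ℝ (Fin 2))) (hK : IsCompact K)
    (hBopen : IsOpen B) (hBbd : Bornology.IsBounded B) (hKB : K ⊆ B)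
    (μ : Measure (EuclideanSpace ℝ (Fin 2))) [IsProbabilityMeasure μ]
    (hμK : μ Kᶜ = 0)
    (henergy : Integrable
      (fun p : EuclideanSpace ℝ (Fin 2) × EuclideanSpace ℝ (Fin 2) =>
        Real.log ‖p.1 - p.2‖) (μ.prod μ)) :
    Integrable
      (fun p : EuclideanSpace ℝ (Fin 2) × EuclideanSpace ℝ (Fin 2) =>
        ∫ x in B, (‖x - p.1‖ * ‖x - p.2‖)⁻¹) (μ.prod μ) :=
  stmt3_general K B hBopen hBbd hKB μ hμK henergy
end

section
/- Let y, z ∈ ℝ² with y ≠ z and set d := |y−z|/2. Then for every x ∈ ℝ² with |x−y| ≥ 3d and |x−z| ≥ 3d, one has (x−y) · (x−z) ≥ (7/9) |x−y| |x−z|. In particular, the angle at x subtended by the segment from y to z is bounded away from π/2 uniformly in x, y, z. -/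
open scoped RealInnerProductSpace

/-- For distinct `y, z ∈ ℝ²` with `d = |y-z|/2`, every `x` with
`|x-y| ≥ 3d` and `|x-z| ≥ 3d` satisfies `(x-y)·(x-z) ≥ (7/9)|x-y||x-z|`. -/
theorem stmt8 (y z : EuclideanSpace ℝ (Fin 2)) (hyz : y ≠ z)
    (x : EuclideanSpace ℝ (Fin 2))
    (hx1 : 3 * (‖y - z‖ / 2) ≤ ‖x - y‖) (hx2 : 3 * (‖y - z‖ / 2) ≤ ‖x - z‖) :
    (7 / 9 : ℝ) * (‖x - y‖ * ‖x - z‖) ≤ ⟪x - y, x - z⟫ := by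
  have hsub : (x - y) - (x - z) = z - y := by abel
  have hkey : ‖(x - y) - (x - z)‖ ^ 2 =
      ‖x - y‖ ^ 2 - 2 * ⟪x - y, x - z⟫ + ‖x - z‖ ^ 2 := norm_sub_sq_real _ _
  rw [hsub, norm_sub_rev] at hkey
  have h0 : (0 : ℝ) < ‖y - z‖ := by
    rw [norm_pos_iff, sub_ne_zero]; exact hyz
  nlinarith [sq_nonneg (‖x - y‖ - ‖x - z‖), mul_le_mul hx1 hx2 (by positivity) (le_trans (by positivity) hx1)]
end

section
/- Let y, z ∈ ℝ² with y ≠ z, set d := |y−z|/2, and let D := B_{3d}(y) ∪ B_{3d}(z) be the union of the open disks of radius 3d centered at y and z. Then ∫_D 1/(|x−y| |x−z|) dx ≤ 12π. -/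
/-!
Since `‖x - y‖ + ‖x - z‖ ≥ 2d`, one of the two distances is at least `d`, so on `D` the integrand
is at most `d⁻¹ ‖x - a‖⁻¹` for the nearer centre `a`, and `x ∈ B_{3d}(a)`. In polar coordinates
`∫_{B_R(a)} ‖x - a‖⁻¹ dx = ∫₀^R 2π r · r⁻¹ dr = 2πR`, so the integral is at most
`d⁻¹ (2π · 3d + 2π · 3d) = 12π`.
-/

open MeasureTheory Metric Set Module
open scoped Real

theorem inv_norm_sub_mul_norm_sub_le {E : Type*} [NormedAddCommGroup E] {x y z : E} {R : ℝ}
    (hyz : y ≠ z) (hx : x ∈ ball y R ∪ ball z R) :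
    (‖x - y‖ * ‖x - z‖)⁻¹ ≤ (‖y - z‖ / 2)⁻¹ *
      ((ball y R).indicator (fun x ↦ ‖x - y‖⁻¹) x + (ball z R).indicator (fun x ↦ ‖x - z‖⁻¹) x) := by
  wlog hle : ‖x - y‖ ≤ ‖x - z‖ generalizing y z
  · have := this hyz.symm (by rwa [union_comm]) (le_of_not_ge hle)
    rwa [mul_comm, norm_sub_rev z y, add_comm] at this
  have hyz' : 0 < ‖y - z‖ := norm_sub_pos_iff.mpr hyz
  have hxy : x ∈ ball y R := hx.elim id fun hxz ↦ by
    rw [mem_ball_iff_norm] at hxz ⊢; linarith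
  have hd : ‖y - z‖ / 2 ≤ ‖x - z‖ := by
    have := norm_sub_le_norm_sub_add_norm_sub y x z
    rw [norm_sub_rev y x] at this; linarith
  rw [indicator_of_mem hxy]
  have hz : 0 ≤ (ball z R).indicator (fun x ↦ ‖x - z‖⁻¹) x :=
    indicator_nonneg (fun _ _ ↦ by positivity) _
  rcases (norm_nonneg (x - y)).eq_or_lt with hxy0 | hxy0
  · rw [← hxy0, zero_mul, inv_zero]
    exact mul_nonneg (by positivity) (add_nonneg (by positivity) hz)
  calc (‖x - y‖ * ‖x - z‖)⁻¹ ≤ (‖x - y‖ * (‖y - z‖ / 2))⁻¹ := by gcongr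
    _ = (‖y - z‖ / 2)⁻¹ * ‖x - y‖⁻¹ := by rw [mul_inv, mul_comm]
    _ ≤ _ := by
      gcongr
      exact le_add_of_nonneg_right hz

theorem eqOn_pow_succ_smul_indicator_inv (m : ℕ) (R : ℝ) :
    EqOn (fun y : ℝ ↦ y ^ (m + 1) • (Iio R).indicator (·⁻¹) y) ((Iio R).indicator (· ^ m))
      (Ioi 0) := by
  intro y hy
  by_cases hyR : y ∈ Iio R
  · simp [hyR, pow_succ, mul_inv_cancel_right₀ (ne_of_gt (mem_Ioi.mp hy))]
  · simp [hyR]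

theorem integrableOn_pow_succ_smul_indicator_inv (m : ℕ) (R : ℝ) :
    IntegrableOn (fun y : ℝ ↦ y ^ (m + 1) • (Iio R).indicator (·⁻¹) y) (Ioi 0) := by
  refine IntegrableOn.congr_fun ?_ (eqOn_pow_succ_smul_indicator_inv m R).symm measurableSet_Ioi
  rw [integrableOn_indicator_iff measurableSet_Iio, Iio_inter_Ioi]
  exact (continuous_pow m).integrableOn_Icc.mono_set Ioo_subset_Icc_self

theorem integral_pow_succ_smul_indicator_inv (m : ℕ) {R : ℝ} (hR : 0 ≤ R) :
    ∫ y in Ioi (0 : ℝ), y ^ (m + 1) • (Iio R).indicator (·⁻¹) y = R ^ (m + 1) / (m + 1) := by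
  rw [setIntegral_congr_fun measurableSet_Ioi (eqOn_pow_succ_smul_indicator_inv m R),
    setIntegral_indicator measurableSet_Iio, Ioi_inter_Iio, ← integral_Ioc_eq_integral_Ioo,
    ← intervalIntegral.integral_of_le hR, integral_pow]
  simp

theorem indicator_ball_inv_norm_sub {E : Type*} [SeminormedAddCommGroup E] (a : E) (R : ℝ) :
    (ball a R).indicator (fun x ↦ ‖x - a‖⁻¹) = fun x ↦ (Iio R).indicator (·⁻¹) ‖x - a‖ := by
  ext x
  simp only [indicator, mem_ball, dist_eq_norm, mem_Iio]

section HaarMeasure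

variable {E : Type*} [NormedAddCommGroup E] [NormedSpace ℝ E] [FiniteDimensional ℝ E]
  [MeasurableSpace E] [BorelSpace E] (μ : Measure E) [μ.IsAddHaarMeasure]

theorem integrable_indicator_ball_inv_norm_sub (hE : 2 ≤ finrank ℝ E) (a : E) (R : ℝ) :
    Integrable ((ball a R).indicator fun x ↦ ‖x - a‖⁻¹) μ := by
  obtain ⟨m, hm⟩ : ∃ m, finrank ℝ E = m + 1 + 1 := ⟨finrank ℝ E - 2, by omega⟩
  have : Nontrivial E := Module.nontrivial_of_finrank_pos (R := ℝ) (by omega)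
  rw [indicator_ball_inv_norm_sub]
  refine Integrable.comp_sub_right (f := fun x : E ↦ (Iio R).indicator (·⁻¹) ‖x‖) ?_ a
  rw [integrable_fun_norm_addHaar, hm]
  exact integrableOn_pow_succ_smul_indicator_inv m R

theorem integral_indicator_ball_inv_norm_sub (hE : 2 ≤ finrank ℝ E) (a : E) {R : ℝ} (hR : 0 ≤ R) :
    ∫ x, (ball a R).indicator (fun x ↦ ‖x - a‖⁻¹) x ∂μ =
      finrank ℝ E / (finrank ℝ E - 1) * μ.real (ball 0 1) * R ^ (finrank ℝ E - 1) := by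
  obtain ⟨m, hm⟩ : ∃ m, finrank ℝ E = m + 1 + 1 := ⟨finrank ℝ E - 2, by omega⟩
  have : Nontrivial E := Module.nontrivial_of_finrank_pos (R := ℝ) (by omega)
  rw [indicator_ball_inv_norm_sub, integral_sub_right_eq_self (fun x ↦ (Iio R).indicator (·⁻¹) ‖x‖),
    integral_fun_norm_addHaar, hm, Nat.add_sub_cancel, integral_pow_succ_smul_indicator_inv m hR]
  simp only [nsmul_eq_mul, smul_eq_mul]
  push_cast
  ring

end HaarMeasure

theorem measureReal_ball_fin_two (a : EuclideanSpace ℝ (Fin 2)) :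
    volume.real (ball a 1) = π := by
  simp [Measure.real, Real.pi_nonneg]

theorem integral_indicator_ball_inv_norm_sub_fin_two (a : EuclideanSpace ℝ (Fin 2)) {R : ℝ}
    (hR : 0 ≤ R) : ∫ x, (ball a R).indicator (fun x ↦ ‖x - a‖⁻¹) x = 2 * π * R := by
  rw [integral_indicator_ball_inv_norm_sub volume (by simp) a hR, measureReal_ball_fin_two]
  norm_num

/-- For distinct `y, z ∈ ℝ²` with `d = |y-z|/2` and
`D = B_{3d}(y) ∪ B_{3d}(z)`, one has `∫_D 1/(|x-y||x-z|) dx ≤ 12π`. -/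
theorem stmt9 (y z : EuclideanSpace ℝ (Fin 2)) (hyz : y ≠ z) :
    (∫ x in Metric.ball y (3 * (‖y - z‖ / 2)) ∪ Metric.ball z (3 * (‖y - z‖ / 2)),
        (‖x - y‖ * ‖x - z‖)⁻¹) ≤ 12 * π := by
  set R := 3 * (‖y - z‖ / 2)
  have hR : 0 ≤ R := by positivity
  have h2 : 2 ≤ finrank ℝ (EuclideanSpace ℝ (Fin 2)) := by simp
  have hy := integrable_indicator_ball_inv_norm_sub volume h2 y R
  have hz := integrable_indicator_ball_inv_norm_sub volume h2 z R
  set g : EuclideanSpace ℝ (Fin 2) → ℝ := fun x ↦ (‖y - z‖ / 2)⁻¹ *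
    ((ball y R).indicator (fun x ↦ ‖x - y‖⁻¹) x + (ball z R).indicator (fun x ↦ ‖x - z‖⁻¹) x)
  have hg : Integrable g := (hy.add hz).const_mul _
  have hg_nonneg : 0 ≤ g := fun x ↦ mul_nonneg (by positivity)
    (add_nonneg (indicator_nonneg (fun _ _ ↦ by positivity) _)
      (indicator_nonneg (fun _ _ ↦ by positivity) _))
  calc ∫ x in ball y R ∪ ball z R, (‖x - y‖ * ‖x - z‖)⁻¹
      ≤ ∫ x in ball y R ∪ ball z R, g x :=
        integral_mono_of_nonneg (ae_of_all _ fun _ ↦ by positivity) hg.integrableOn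
          (ae_restrict_of_forall_mem (measurableSet_ball.union measurableSet_ball)
            fun _ hx ↦ inv_norm_sub_mul_norm_sub_le hyz hx)
    _ ≤ ∫ x, g x := setIntegral_le_integral hg (ae_of_all _ hg_nonneg)
    _ = 12 * π := by
      have hyz' : 0 < ‖y - z‖ := norm_sub_pos_iff.mpr hyz
      rw [integral_const_mul, integral_add hy hz, integral_indicator_ball_inv_norm_sub_fin_two y hR,
        integral_indicator_ball_inv_norm_sub_fin_two z hR]
      field_simp
      ring
end

section
/- Let K ⊂ ℝ² be compact. For each n ∈ ℕ, let a₁ⁿ,…,aₙⁿ ∈ K be pairwise distinct points, let μⁿ = (1/n)∑_{i=1}^n δ_{aᵢⁿ}, and suppose μⁿ converges weakly-* to a probability measure μ on K. If the discrete logarithmic interaction energies are uniformly bounded above, i.e. there exists C > 0 with −(1/n²)∑_{i≠j} log|aᵢⁿ − aⱼⁿ| ≤ C for all n, then μ⊗μ does not charge the diagonal: (μ⊗μ)({(y,z) : y = z}) = 0. In particular, μ charges no points. -/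
/-!
If `μ` had an atom of mass `ε` at `x`, testing the weak-* convergence against a tent function
around `x` would put more than `εn/2` of the `n` points into the ball `B(x, r)` for large `n`.
Each of the resulting `≈ ε²n²/4` ordered pairs contributes at least `log D - log 2r` to
`∑_{i≠j} (log D - log |aᵢ - aⱼ|)`, a sum of nonnegative terms (`D ≥ diam K`) which the energy
bound keeps below `n² (C + log D)`. Hence `(ε/2)² (log D - log 2r) ≤ C + log D` for every
`r > 0`, which is absurd as `r → 0`. Without atoms, Fubini gives `(μ ⊗ μ)(diagonal) = 0`.
-/

open MeasureTheory Filter Topology Finset Real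
open scoped ENNReal

theorem integral_inv_natCast_smul_sum_dirac {X : Type*} [MeasurableSpace X]
    [MeasurableSingletonClass X] (f : X → ℝ) (p : ℕ → X) (n : ℕ) :
    ∫ x, f x ∂(((n : ℝ≥0∞))⁻¹ • ∑ i ∈ range n, Measure.dirac (p i)) =
      (n : ℝ)⁻¹ * ∑ i ∈ range n, f (p i) := by
  rw [integral_smul_measure, integral_finsetSum_measure fun i _ ↦ integrable_dirac (by simp)]
  simp [integral_dirac, ENNReal.toReal_inv]

section Tent

variable {X : Type*} [PseudoMetricSpace X]

noncomputable def tent (x : X) (r : ℝ) (y : X) : ℝ := max 0 (1 - dist y x / r)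

variable {x y : X} {r : ℝ}

@[fun_prop]
theorem continuous_tent (x : X) (r : ℝ) : Continuous (tent x r) := by
  unfold tent; fun_prop

theorem tent_nonneg : 0 ≤ tent x r y := le_max_left _ _

theorem tent_le_ite (hr : 0 < r) : tent x r y ≤ if dist y x < r then 1 else 0 := by
  split_ifs with h
  · exact max_le zero_le_one (sub_le_self _ (by positivity))
  · refine max_le le_rfl ?_
    rw [sub_nonpos, le_div_iff₀ hr, one_mul]
    exact not_lt.mp h

theorem indicator_singleton_le_tent : ({x} : Set X).indicator 1 y ≤ tent x r y := by
  by_cases h : y = x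
  · simp [h, tent]
  · simpa [h] using tent_nonneg

theorem abs_tent_le_one (hr : 0 < r) : |tent x r y| ≤ 1 := by
  rw [abs_of_nonneg tent_nonneg]
  exact (tent_le_ite hr).trans (by split_ifs <;> norm_num)

end Tent

theorem eventually_mul_lt_card_dist_lt {X : Type*} [PseudoMetricSpace X] [MeasurableSpace X]
    [OpensMeasurableSpace X] [MeasurableSingletonClass X] (a : ℕ → ℕ → X)
    (μ : Measure X) [IsFiniteMeasure μ]
    (hconv : ∀ ψ : X → ℝ, Continuous ψ →
      Tendsto (fun n : ℕ => ∫ x, ψ x ∂(((n : ℝ≥0∞))⁻¹ • ∑ i ∈ range n, Measure.dirac (a n i)))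
        atTop (𝓝 (∫ x, ψ x ∂μ)))
    (x : X) {r : ℝ} (hr : 0 < r) {c : ℝ} (hc : c < μ.real {x}) :
    ∀ᶠ n : ℕ in atTop, c * n < #{i ∈ range n | dist (a n i) x < r} := by
  have hatom : μ.real {x} ≤ ∫ y, tent x r y ∂μ := by
    rw [← integral_indicator_one (measurableSet_singleton x)]
    exact integral_mono ((integrable_const 1).indicator (measurableSet_singleton x))
      (.of_bound (continuous_tent x r).aestronglyMeasurable 1
        (.of_forall fun _ ↦ abs_tent_le_one hr)) fun _ ↦ indicator_singleton_le_tent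
  filter_upwards [(hconv _ (continuous_tent x r)).eventually_const_lt (hc.trans_le hatom),
    eventually_gt_atTop 0] with n hn hn0
  rw [integral_inv_natCast_smul_sum_dirac, inv_mul_eq_div, lt_div_iff₀ (by positivity)] at hn
  refine hn.trans_le ?_
  rw [natCast_card_filter]
  exact sum_le_sum fun i _ ↦ tent_le_ite hr

section Energy

variable {X ι : Type*} [MetricSpace X]

theorem card_offDiag_mul_le_sum_log_sub_log_dist [DecidableEq ι] (p : ι → X) {s t : Finset ι}
    (hts : t ⊆ s) (hinj : Set.InjOn p s) {D δ : ℝ}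
    (hD : ∀ i ∈ s, ∀ j ∈ s, dist (p i) (p j) ≤ D)
    (hδ : ∀ i ∈ t, ∀ j ∈ t, dist (p i) (p j) ≤ δ) :
    #t.offDiag * (log D - log δ) ≤ ∑ q ∈ s.offDiag, (log D - log (dist (p q.1) (p q.2))) := by
  have hpos : ∀ q ∈ s.offDiag, 0 < dist (p q.1) (p q.2) := fun q hq ↦ by
    obtain ⟨h1, h2, hne⟩ := mem_offDiag.mp hq
    exact dist_pos.mpr fun h ↦ hne (hinj h1 h2 h)
  calc #t.offDiag * (log D - log δ)
      ≤ ∑ q ∈ t.offDiag, (log D - log (dist (p q.1) (p q.2))) := by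
        rw [← nsmul_eq_mul]
        refine card_nsmul_le_sum _ _ _ fun q hq ↦ ?_
        obtain ⟨h1, h2, -⟩ := mem_offDiag.mp hq
        gcongr
        exacts [hpos q (offDiag_mono hts hq), hδ _ h1 _ h2]
    _ ≤ ∑ q ∈ s.offDiag, (log D - log (dist (p q.1) (p q.2))) := by
        refine sum_le_sum_of_subset_of_nonneg (offDiag_mono hts) fun q hq _ ↦ ?_
        obtain ⟨h1, h2, -⟩ := mem_offDiag.mp hq
        exact sub_nonneg.mpr (log_le_log (hpos q hq) (hD _ h1 _ h2))

theorem card_sq_sub_card_mul_log_le (p : ℕ → X) {n : ℕ} (hinj : Set.InjOn p (range n))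
    {D : ℝ} (hD1 : 1 ≤ D) (hD : ∀ i < n, ∀ j < n, dist (p i) (p j) ≤ D) {C : ℝ}
    (hE : -((n : ℝ) ^ 2)⁻¹ * ∑ q ∈ (range n).offDiag, log (dist (p q.1) (p q.2)) ≤ C)
    {t : Finset ℕ} (ht : t ⊆ range n) {δ : ℝ} (hδ : ∀ i ∈ t, ∀ j ∈ t, dist (p i) (p j) ≤ δ) :
    ((#t : ℝ) ^ 2 - #t) * (log D - log δ) ≤ n ^ 2 * (C + log D) := by
  have hcluster :=
    card_offDiag_mul_le_sum_log_sub_log_dist p ht hinj (by simpa using hD) hδ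
  have hcard : (#(range n).offDiag : ℝ) ≤ n ^ 2 := by
    rw [offDiag_card, card_range]
    exact_mod_cast (Nat.sub_le _ _).trans (sq n).ge
  have henergy : -∑ q ∈ (range n).offDiag, log (dist (p q.1) (p q.2)) ≤ n ^ 2 * C := by
    rcases n.eq_zero_or_pos with rfl | hn
    · simp
    · rwa [neg_mul, ← mul_neg, inv_mul_le_iff₀ (by positivity)] at hE
  rw [sum_sub_distrib, sum_const, nsmul_eq_mul] at hcluster
  rw [offDiag_card, Nat.cast_sub (Nat.le_mul_self _), Nat.cast_mul] at hcluster
  nlinarith [log_nonneg hD1]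

end Energy

section Atoms

variable {X : Type*} [MetricSpace X] [MeasurableSpace X] [OpensMeasurableSpace X]
  {a : ℕ → ℕ → X} (hinj : ∀ n, Set.InjOn (a n) (range n))
  {μ : Measure X} [IsFiniteMeasure μ]
  (hconv : ∀ ψ : X → ℝ, Continuous ψ →
    Tendsto (fun n : ℕ => ∫ x, ψ x ∂(((n : ℝ≥0∞))⁻¹ • ∑ i ∈ range n, Measure.dirac (a n i)))
      atTop (𝓝 (∫ x, ψ x ∂μ)))
  {C : ℝ} (hE : ∀ n : ℕ,
    -((n : ℝ) ^ 2)⁻¹ * ∑ q ∈ (range n).offDiag, log (dist (a n q.1) (a n q.2)) ≤ C)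
include hinj hconv hE

theorem sq_mul_log_sub_log_le_of_lt_measureReal_singleton {D : ℝ} (hD1 : 1 ≤ D)
    (hD : ∀ n, ∀ i < n, ∀ j < n, dist (a n i) (a n j) ≤ D) {x : X} {c : ℝ} (hc0 : 0 ≤ c)
    (hc : c < μ.real {x}) {r : ℝ} (hr : 0 < r) (hrD : 2 * r ≤ D) :
    c ^ 2 * (log D - log (2 * r)) ≤ C + log D := by
  set L := log D - log (2 * r)
  have hL : 0 ≤ L := sub_nonneg.mpr (log_le_log (by positivity) hrD)
  have hlim : Tendsto (fun n : ℕ ↦ (c ^ 2 - 1 / n) * L) atTop (𝓝 (c ^ 2 * L)) := by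
    simpa using (tendsto_const_nhds.sub tendsto_one_div_atTop_nhds_zero_nat).mul_const L
  refine le_of_tendsto hlim ?_
  filter_upwards [eventually_mul_lt_card_dist_lt a μ hconv x hr hc, eventually_gt_atTop 0]
    with n hn hn0
  have hcluster := card_sq_sub_card_mul_log_le (a n) (hinj n) hD1 (hD n) (hE n)
    (filter_subset (fun i ↦ dist (a n i) x < r) _) (δ := 2 * r) fun i hi j hj ↦ by
      rw [mem_filter] at hi hj
      linarith [dist_triangle_right (a n i) (a n j) x]
  have hm : (#{i ∈ range n | dist (a n i) x < r} : ℝ) ≤ n := by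
    exact_mod_cast (card_filter_le _ _).trans (card_range n).le
  have hn' : (0 : ℝ) < n := by exact_mod_cast hn0
  have hsq : c ^ 2 * n ^ 2 - n ≤ (#{i ∈ range n | dist (a n i) x < r} : ℝ) ^ 2 -
      #{i ∈ range n | dist (a n i) x < r} := by
    nlinarith [mul_self_le_mul_self (by positivity : 0 ≤ c * n) hn.le]
  rw [← mul_le_mul_iff_of_pos_left (pow_pos hn' 2)]
  calc (n : ℝ) ^ 2 * ((c ^ 2 - 1 / n) * L) = (c ^ 2 * n ^ 2 - n) * L := by field_simp
    _ ≤ _ := (mul_le_mul_of_nonneg_right hsq hL).trans hcluster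

theorem measure_singleton_eq_zero_of_energy_le
    (hbdd : ∃ D, ∀ n, ∀ i < n, ∀ j < n, dist (a n i) (a n j) ≤ D) (x : X) : μ {x} = 0 := by
  obtain ⟨D₀, hD₀⟩ := hbdd
  set D := max D₀ 1
  have hD1 : 1 ≤ D := le_max_right _ _
  have hD : ∀ n, ∀ i < n, ∀ j < n, dist (a n i) (a n j) ≤ D :=
    fun n i hi j hj ↦ (hD₀ n i hi j hj).trans (le_max_left _ _)
  by_contra hx
  have hμx : 0 < μ.real {x} := ENNReal.toReal_pos hx (measure_ne_top μ _)
  set c := μ.real {x} / 2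
  have hc : 0 < c := half_pos hμx
  have hbound : ∀ T ≥ 0, c ^ 2 * (log D + T) ≤ C + log D := fun T hT ↦ by
    have hexp : 2 * (exp (-T) / 2) = exp (-T) := mul_div_cancel₀ _ two_ne_zero
    simpa [hexp] using sq_mul_log_sub_log_le_of_lt_measureReal_singleton hinj hconv hE hD1 hD
      hc.le (half_lt_self hμx) (by positivity)
      (hexp.trans_le ((exp_le_one_iff.mpr (by linarith)).trans hD1))
  have hlarge := hbound (max 0 ((C + log D) / c ^ 2) + 1) (by positivity)
  have hmax : C + log D ≤ max 0 ((C + log D) / c ^ 2) * c ^ 2 :=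
    (div_le_iff₀ (by positivity)).mp (le_max_right _ _)
  nlinarith [log_nonneg hD1]

end Atoms

theorem MeasureTheory.Measure.prod_diagonal_eq_zero {X : Type*} [MeasurableSpace X]
    [MeasurableEq X] (μ ν : Measure X) [SFinite ν] (h : ∀ x, ν {x} = 0) :
    μ.prod ν (Set.diagonal X) = 0 := by
  rw [Measure.prod_apply measurableSet_diagonal]
  simp [Set.preimage, Set.mem_diagonal_iff, h]

theorem stmt12_general
    (K : Set (EuclideanSpace ℝ (Fin 2))) (hK : IsCompact K)
    (a : ℕ → ℕ → EuclideanSpace ℝ (Fin 2))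
    (ha : ∀ n, ∀ i < n, a n i ∈ K)
    (hdist : ∀ n, ∀ i < n, ∀ j < n, i ≠ j → a n i ≠ a n j)
    (μ : Measure (EuclideanSpace ℝ (Fin 2))) [IsProbabilityMeasure μ]
    (hconv : ∀ ψ : EuclideanSpace ℝ (Fin 2) → ℝ, Continuous ψ →
      Tendsto (fun n : ℕ =>
          ∫ x, ψ x ∂(((n : ℝ≥0∞))⁻¹ • ∑ i ∈ Finset.range n, Measure.dirac (a n i)))
        atTop (𝓝 (∫ x, ψ x ∂μ)))
    (C : ℝ)
    (hbound : ∀ n : ℕ,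
      -((n : ℝ) ^ 2)⁻¹ *
          ∑ q ∈ (Finset.range n).offDiag, Real.log ‖a n q.1 - a n q.2‖ ≤ C) :
    (μ.prod μ) {p : EuclideanSpace ℝ (Fin 2) × EuclideanSpace ℝ (Fin 2) | p.1 = p.2} = 0 ∧
      ∀ x, μ {x} = 0 := by
  obtain ⟨D, hD⟩ := Metric.isBounded_iff.mp hK.isBounded
  have hatoms : ∀ x, μ {x} = 0 :=
    measure_singleton_eq_zero_of_energy_le
      (fun n i hi j hj hij ↦ by_contra fun h ↦
        hdist n i (mem_range.mp hi) j (mem_range.mp hj) h hij)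
      hconv (fun n ↦ by simpa only [dist_eq_norm] using hbound n)
      ⟨D, fun n i hi j hj ↦ hD (ha n i hi) (ha n j hj)⟩
  exact ⟨Measure.prod_diagonal_eq_zero μ μ hatoms, hatoms⟩

/-- If empirical measures of pairwise distinct points in a compact `K ⊆ ℝ²`
converge weakly-* to a probability measure `μ` on `K`, and the discrete logarithmic
interaction energies `-(1/n²)∑_{i≠j} log|aᵢⁿ - aⱼⁿ|` are uniformly bounded above, then
`μ ⊗ μ` does not charge the diagonal; in particular `μ` charges no points. -/
theorem stmt12
    (K : Set (EuclideanSpace ℝ (Fin 2))) (hK : IsCompact K)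
    (a : ℕ → ℕ → EuclideanSpace ℝ (Fin 2))
    (ha : ∀ n, ∀ i < n, a n i ∈ K)
    (hdist : ∀ n, ∀ i < n, ∀ j < n, i ≠ j → a n i ≠ a n j)
    (μ : Measure (EuclideanSpace ℝ (Fin 2))) [IsProbabilityMeasure μ]
    (hμK : μ Kᶜ = 0)
    (hconv : ∀ ψ : EuclideanSpace ℝ (Fin 2) → ℝ, Continuous ψ →
      Tendsto (fun n : ℕ =>
          ∫ x, ψ x ∂(((n : ℝ≥0∞))⁻¹ • ∑ i ∈ Finset.range n, Measure.dirac (a n i)))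
        atTop (𝓝 (∫ x, ψ x ∂μ)))
    (C : ℝ) (hC : 0 < C)
    (hbound : ∀ n : ℕ,
      -((n : ℝ) ^ 2)⁻¹ *
          ∑ q ∈ (Finset.range n).offDiag, Real.log ‖a n q.1 - a n q.2‖ ≤ C) :
    (μ.prod μ) {p : EuclideanSpace ℝ (Fin 2) × EuclideanSpace ℝ (Fin 2) | p.1 = p.2} = 0 ∧
      ∀ x, μ {x} = 0 :=
  stmt12_general K hK a ha hdist μ hconv C hbound
end
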